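/- Under the L¹ assumptions for two data sets (f₁,ψ,g) and (f₂,ψ,g), if u₁, u₂ are the entropy solutions satisfying the Lewy–Stampacchia inequalities, ξᵢ = Δ_A uᵢ − fᵢ, and both solutions satisfy Δ_A uᵢ − (Δ_A ψ − fᵢ)χ_{{uᵢ=ψ}} = fᵢ a.e., and Δ_A ψ − fᵢ ≤ −λ < 0 a.e. on a measurable set ω ⊂ Ω, then the Lebesgue measure of the symmetric difference of the coincidence sets satisfies |({u₁=ψ} Δ {u₂=ψ}) ∩ ω| ≤ (1/λ)·∫_Ω |f₁ − f₂| dx, given the L¹-contraction ∫_Ω|ξ₁−ξ₂| ≤ ∫_Ω|f₁−f₂|. -/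

import Mathlib

open Real Set MeasureTheory

/-- The `A`-gradient `∇_A w = (a(|∇w|)/|∇w|)∇w`. -/
noncomputable def gradA {N : ℕ} (a : ℝ → ℝ)
    (w : EuclideanSpace ℝ (Fin N) → ℝ) (x : EuclideanSpace ℝ (Fin N)) :
    EuclideanSpace ℝ (Fin N) :=
  (a ‖gradient w x‖ / ‖gradient w x‖) • gradient w x

/-- The divergence of a vector field on `ℝᴺ`. -/
noncomputable def diverg {N : ℕ}
    (V : EuclideanSpace ℝ (Fin N) → EuclideanSpace ℝ (Fin N))
    (x : EuclideanSpace ℝ (Fin N)) : ℝ :=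
  ∑ i : Fin N, fderiv ℝ V x (EuclideanSpace.single i 1) i

/-- The `A`-Laplacian `Δ_A w = div(∇_A w)`. -/
noncomputable def lapA {N : ℕ} (a : ℝ → ℝ)
    (w : EuclideanSpace ℝ (Fin N) → ℝ) (x : EuclideanSpace ℝ (Fin N)) : ℝ :=
  diverg (gradA a w) x

open scoped symmDiff

/-! The difference `ξ₁ - ξ₂` of the two obstacle reactions `ξᵢ = (Δ_Aψ - fᵢ)·χ_{Iᵢ}` equals
`Δ_Aψ - f₁` on `I₁ \ I₂` and `-(Δ_Aψ - f₂)` on `I₂ \ I₁`, so nondegeneracy gives `λ ≤ |ξ₁ - ξ₂|`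
on `(I₁ ∆ I₂) ∩ ω`. Chebyshev's inequality and the L¹-contraction then bound the measure of that
set by `λ⁻¹ ∫_Ω |f₁ - f₂|`. -/

theorem le_abs_mul_indicator_sub_mul_indicator {α : Type*} {s t : Set α} {x : α}
    (hx : x ∈ s ∆ t) {p q c : ℝ} (hp : p ≤ -c) (hq : q ≤ -c) :
    c ≤ |p * s.indicator (fun _ => (1 : ℝ)) x - q * t.indicator (fun _ => (1 : ℝ)) x| := by
  rcases hx with ⟨hs, ht⟩ | ⟨ht, hs⟩
  · rw [indicator_of_mem hs, indicator_of_notMem ht, mul_one, mul_zero, sub_zero]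
    exact (le_neg.mpr hp).trans (neg_le_abs p)
  · rw [indicator_of_notMem hs, indicator_of_mem ht, mul_one, mul_zero, zero_sub, abs_neg]
    exact (le_neg.mpr hq).trans (neg_le_abs q)

theorem mul_measureReal_le_setIntegral_of_ae_le {α : Type*} [MeasurableSpace α]
    {μ : Measure α} {s t : Set α} {f : α → ℝ} {c : ℝ} (hst : s ⊆ t) (hs : μ s ≠ ⊤)
    (hf : IntegrableOn f t μ) (hf₀ : 0 ≤ᵐ[μ.restrict t] f) (hc : ∀ᵐ x ∂μ.restrict s, c ≤ f x) :
    c * μ.real s ≤ ∫ x in t, f x ∂μ :=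
  calc c * μ.real s = ∫ _ in s, c ∂μ := by rw [setIntegral_const, smul_eq_mul, mul_comm]
    _ ≤ ∫ x in s, f x ∂μ := integral_mono_ae (integrableOn_const hs) (hf.mono_set hst) hc
    _ ≤ ∫ x in t, f x ∂μ := setIntegral_mono_set hf hf₀ hst.eventuallyLE

theorem stmt_15_general {N : ℕ}
    (Ω ω : Set (EuclideanSpace ℝ (Fin N)))
    (hΩb : Bornology.IsBounded Ω) (hωm : MeasurableSet ω) (hωΩ : ω ⊆ Ω)
    (a : ℝ → ℝ)
    (ψ f₁ f₂ u₁ u₂ : EuclideanSpace ℝ (Fin N) → ℝ)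
    (lam : ℝ) (hlam : 0 < lam)
    -- the coincidence sets `Iᵢ = {uᵢ = ψ}` are measurable
    (hI₁ : MeasurableSet {x | u₁ x = ψ x}) (hI₂ : MeasurableSet {x | u₂ x = ψ x})
    -- integrability of `ξ₁ - ξ₂` and of `f₁ - f₂` on `Ω`
    (hξint : IntegrableOn (fun x => (lapA a u₁ x - f₁ x) - (lapA a u₂ x - f₂ x)) Ω)
    -- the a.e. equations (1.13) for both solutions
    (heq₁ : ∀ᵐ x ∂(volume.restrict Ω),
      lapA a u₁ x - (lapA a ψ x - f₁ x) * ({y | u₁ y = ψ y}.indicator (fun _ => (1:ℝ)) x)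
        = f₁ x)
    (heq₂ : ∀ᵐ x ∂(volume.restrict Ω),
      lapA a u₂ x - (lapA a ψ x - f₂ x) * ({y | u₂ y = ψ y}.indicator (fun _ => (1:ℝ)) x)
        = f₂ x)
    -- the nondegeneracy condition (1.17) on `ω`
    (hnd₁ : ∀ᵐ x ∂(volume.restrict ω), lapA a ψ x - f₁ x ≤ -lam)
    (hnd₂ : ∀ᵐ x ∂(volume.restrict ω), lapA a ψ x - f₂ x ≤ -lam)
    -- the L¹-contraction (1.16)
    (hcontract :
      (∫ x in Ω, |(lapA a u₁ x - f₁ x) - (lapA a u₂ x - f₂ x)|)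
        ≤ ∫ x in Ω, |f₁ x - f₂ x|) :
    (volume ((({x | u₁ x = ψ x} \ {x | u₂ x = ψ x}) ∪
              ({x | u₂ x = ψ x} \ {x | u₁ x = ψ x})) ∩ ω)).toReal
      ≤ (1 / lam) * ∫ x in Ω, |f₁ x - f₂ x| := by
  set S := ({x | u₁ x = ψ x} ∆ {x | u₂ x = ψ x}) ∩ ω
  have hSω : S ⊆ ω := inter_subset_right
  have hSΩ : S ⊆ Ω := hSω.trans hωΩ
  have hbound : ∀ᵐ x ∂volume.restrict S,
      lam ≤ |(lapA a u₁ x - f₁ x) - (lapA a u₂ x - f₂ x)| := by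
    filter_upwards [ae_restrict_of_ae_restrict_of_subset hSΩ heq₁,
      ae_restrict_of_ae_restrict_of_subset hSΩ heq₂,
      ae_restrict_of_ae_restrict_of_subset hSω hnd₁,
      ae_restrict_of_ae_restrict_of_subset hSω hnd₂,
      ae_restrict_mem ((hI₁.symmDiff hI₂).inter hωm)] with x e₁ e₂ n₁ n₂ hx
    convert le_abs_mul_indicator_sub_mul_indicator hx.1 n₁ n₂ using 2
    linarith
  have hchebyshev := mul_measureReal_le_setIntegral_of_ae_le hSΩ
    ((measure_mono hSΩ).trans_lt hΩb.measure_lt_top).ne hξint.abs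
    (.of_forall fun _ => abs_nonneg _) hbound
  rw [one_div_mul_eq_div, le_div_iff₀' hlam]
  exact hchebyshev.trans hcontract

/-- Corollary 1.2 (stability of coincidence sets): let `u₁, u₂` be the entropy solutions for
the data `(f₁,ψ,g)`, `(f₂,ψ,g)` with `ξᵢ = Δ_A uᵢ - fᵢ`, satisfying the a.e. equations
`Δ_A uᵢ - (Δ_Aψ - fᵢ)·χ_{uᵢ=ψ} = fᵢ`, the nondegeneracy `Δ_Aψ - fᵢ ≤ -λ < 0` a.e. on a
measurable set `ω ⊆ Ω`, and the L¹-contraction `∫_Ω|ξ₁-ξ₂| ≤ ∫_Ω|f₁-f₂|`. Then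
`|({u₁=ψ} Δ {u₂=ψ}) ∩ ω| ≤ (1/λ)·∫_Ω |f₁-f₂|`. -/
theorem stmt_15 {N : ℕ} (hN : 2 ≤ N)
    (Ω ω : Set (EuclideanSpace ℝ (Fin N))) (hΩo : IsOpen Ω)
    (hΩb : Bornology.IsBounded Ω) (hωm : MeasurableSet ω) (hωΩ : ω ⊆ Ω)
    (a : ℝ → ℝ)
    (ψ g f₁ f₂ u₁ u₂ : EuclideanSpace ℝ (Fin N) → ℝ)
    (lam : ℝ) (hlam : 0 < lam)
    -- the coincidence sets `Iᵢ = {uᵢ = ψ}` are measurable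
    (hI₁ : MeasurableSet {x | u₁ x = ψ x}) (hI₂ : MeasurableSet {x | u₂ x = ψ x})
    -- integrability of `ξ₁ - ξ₂` and of `f₁ - f₂` on `Ω`
    (hξint : IntegrableOn (fun x => (lapA a u₁ x - f₁ x) - (lapA a u₂ x - f₂ x)) Ω)
    (hfint : IntegrableOn (fun x => f₁ x - f₂ x) Ω)
    -- the a.e. equations (1.13) for both solutions
    (heq₁ : ∀ᵐ x ∂(volume.restrict Ω),
      lapA a u₁ x - (lapA a ψ x - f₁ x) * ({y | u₁ y = ψ y}.indicator (fun _ => (1:ℝ)) x)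
        = f₁ x)
    (heq₂ : ∀ᵐ x ∂(volume.restrict Ω),
      lapA a u₂ x - (lapA a ψ x - f₂ x) * ({y | u₂ y = ψ y}.indicator (fun _ => (1:ℝ)) x)
        = f₂ x)
    -- the nondegeneracy condition (1.17) on `ω`
    (hnd₁ : ∀ᵐ x ∂(volume.restrict ω), lapA a ψ x - f₁ x ≤ -lam)
    (hnd₂ : ∀ᵐ x ∂(volume.restrict ω), lapA a ψ x - f₂ x ≤ -lam)
    -- the L¹-contraction (1.16)
    (hcontract :
      (∫ x in Ω, |(lapA a u₁ x - f₁ x) - (lapA a u₂ x - f₂ x)|)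
        ≤ ∫ x in Ω, |f₁ x - f₂ x|) :
    (volume ((({x | u₁ x = ψ x} \ {x | u₂ x = ψ x}) ∪
              ({x | u₂ x = ψ x} \ {x | u₁ x = ψ x})) ∩ ω)).toReal
      ≤ (1 / lam) * ∫ x in Ω, |f₁ x - f₂ x| :=
  stmt_15_general Ω ω hΩb hωm hωΩ a ψ f₁ f₂ u₁ u₂ lam hlam hI₁ hI₂ hξint heq₁ heq₂ hnd₁ hnd₂
    hcontract
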